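/- arXiv:1309.1944 — 5 statements merged into one kernel-verified Lean document; each statement's English description precedes it below -/
import Mathlib

section
/- Let r, s be non-negative integers not both zero, d = r + 2s, and set d_i = 1 for i ≤ r and d_i = 2 for i > r. Let φ be the ℝ-linear map on ∏_{i=1}^{r+s} K_i (K_i = ℝ for i ≤ r, K_i = ℂ for i > r) given by φ(z_1,…,z_{r+s}) = (ξ_1 z_1,…,ξ_{r+s} z_{r+s}) with positive reals ξ_i satisfying ∏ ξ_i^{d_i} = 1. Then for every nonzero z = (z_1,…,z_{r+s}) with ∏_{i=1}^{r+s} |z_i|^{d_i} ≥ η^d for some η > 0, the Euclidean norm of φ(z) is at least √(d/2)·η. -/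
/-!
The diagonal map `φ` has determinant `∏ ξᵢ^{dᵢ} = 1`, so it preserves `N(z) = ∏ |zᵢ|^{dᵢ}`.
Weighted AM–GM with multiplicities `dᵢ` applied to the numbers `|ξᵢ zᵢ|²` gives
`N(φ z)^{2/d} ≤ (1/d) ∑ dᵢ |ξᵢ zᵢ|² ≤ (2/d) ‖φ z‖²`, and `η^d ≤ N(z)` finishes.
-/

open Finset

theorem Real.prod_pow_le_sum_mul_div_pow {ι : Type*} (s : Finset ι) (m : ι → ℕ) (t : ι → ℝ)
    (ht : ∀ i ∈ s, 0 ≤ t i) :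
    ∏ i ∈ s, t i ^ m i ≤ ((∑ i ∈ s, m i * t i) / ∑ i ∈ s, m i) ^ (∑ i ∈ s, m i) := by
  rcases (Nat.zero_le (∑ i ∈ s, m i)).eq_or_lt with hm | hm
  · have hm0 : ∀ i ∈ s, m i = 0 := sum_eq_zero_iff.mp hm.symm
    rw [← hm, pow_zero, prod_congr rfl fun i hi => by rw [hm0 i hi, pow_zero],
      prod_const_one]
  have hmR : (0 : ℝ) < ∑ i ∈ s, (m i : ℝ) := by exact_mod_cast hm
  have hamgm := Real.geom_mean_le_arith_mean s (fun i => (m i : ℝ)) t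
    (fun i _ => Nat.cast_nonneg _) hmR ht
  simp only [Real.rpow_natCast] at hamgm
  rw [Real.rpow_inv_le_iff_of_pos (prod_nonneg fun i hi => pow_nonneg (ht i hi) _)
    (div_nonneg (sum_nonneg fun i hi => mul_nonneg (Nat.cast_nonneg _) (ht i hi)) hmR.le) hmR,
    ← Nat.cast_sum, Real.rpow_natCast] at hamgm
  simpa using hamgm

theorem prod_abs_mul_prod_norm_sq_le {ι κ : Type*} [Fintype ι] [Fintype κ]
    (x : ι → ℝ) (y : κ → ℂ) :
    ((∏ i, |x i|) * ∏ j, ‖y j‖ ^ 2) ^ 2 ≤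
      (2 * (∑ i, x i ^ 2 + ∑ j, ‖y j‖ ^ 2) / (Fintype.card ι + 2 * Fintype.card κ)) ^
        (Fintype.card ι + 2 * Fintype.card κ) := by
  have hamgm := Real.prod_pow_le_sum_mul_div_pow univ (Sum.elim 1 2)
    (Sum.elim (fun i => x i ^ 2) fun j => ‖y j‖ ^ 2)
    (by rintro (i | j) _ <;> simp only [Sum.elim_inl, Sum.elim_inr] <;> positivity)
  simp only [Fintype.prod_sum_type, Fintype.sum_sum_type, Sum.elim_inl, Sum.elim_inr,
    Pi.ofNat_apply, pow_one, Nat.cast_one, one_mul, sum_const, card_univ,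
    smul_eq_mul, mul_one, Nat.cast_add, Nat.cast_mul, Nat.cast_ofNat, ← mul_sum] at hamgm
  rw [mul_comm (Fintype.card κ), mul_comm (Fintype.card κ : ℝ)] at hamgm
  calc ((∏ i, |x i|) * ∏ j, ‖y j‖ ^ 2) ^ 2 = (∏ i, x i ^ 2) * ∏ j, (‖y j‖ ^ 2) ^ 2 := by
        rw [mul_pow, ← abs_prod, sq_abs, ← prod_pow, ← prod_pow]
    _ ≤ ((∑ i, x i ^ 2 + 2 * ∑ j, ‖y j‖ ^ 2) / (Fintype.card ι + 2 * Fintype.card κ)) ^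
          (Fintype.card ι + 2 * Fintype.card κ) := hamgm
    _ ≤ _ := by
        gcongr
        nlinarith [sum_nonneg fun i (_ : i ∈ univ) => sq_nonneg (x i)]

theorem prod_abs_mul_prod_norm_sq_scaled {ι κ : Type*} [Fintype ι] [Fintype κ]
    (ξx x : ι → ℝ) (ξy : κ → ℝ) (y : κ → ℂ) :
    (∏ i, |ξx i * x i|) * ∏ j, ‖(ξy j : ℂ) * y j‖ ^ 2 =
      |(∏ i, ξx i) * ∏ j, ξy j ^ 2| * ((∏ i, |x i|) * ∏ j, ‖y j‖ ^ 2) := by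
  simp only [abs_mul, norm_mul, Complex.norm_real, Real.norm_eq_abs, abs_prod, mul_pow,
    prod_mul_distrib, abs_pow]
  ring

theorem statement3_general (r s : ℕ) (hrs : 0 < r + s) (η : ℝ) (hη : 0 < η)
    (ξx : Fin r → ℝ) (ξy : Fin s → ℝ)
    (hdet : (∏ i, ξx i) * ∏ j, (ξy j) ^ 2 = 1)
    (x : Fin r → ℝ) (y : Fin s → ℂ)
    (hnorm : η ^ (r + 2 * s) ≤ (∏ i, |x i|) * ∏ j, ‖y j‖ ^ 2) :
    Real.sqrt ((r + 2 * s : ℝ) / 2) * η ≤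
      Real.sqrt ((∑ i, (ξx i * x i) ^ 2) + ∑ j, ‖(ξy j : ℂ) * y j‖ ^ 2) := by
  set Q := (∑ i, (ξx i * x i) ^ 2) + ∑ j, ‖(ξy j : ℂ) * y j‖ ^ 2
  have hd : 0 < r + 2 * s := by omega
  have hdR : (0 : ℝ) < r + 2 * s := by exact_mod_cast hd
  have hnorm_scaled : η ^ (r + 2 * s) ≤ (∏ i, |ξx i * x i|) * ∏ j, ‖(ξy j : ℂ) * y j‖ ^ 2 := by
    rwa [prod_abs_mul_prod_norm_sq_scaled, hdet, abs_one, one_mul]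
  have hamgm := prod_abs_mul_prod_norm_sq_le (fun i => ξx i * x i) fun j => (ξy j : ℂ) * y j
  simp only [Fintype.card_fin] at hamgm
  have hη2 : η ^ 2 ≤ 2 * Q / (r + 2 * s) := by
    refine le_of_pow_le_pow_left₀ hd.ne' (by positivity) ?_
    calc (η ^ 2) ^ (r + 2 * s) = (η ^ (r + 2 * s)) ^ 2 := by ring
      _ ≤ _ := pow_le_pow_left₀ (by positivity) hnorm_scaled 2
      _ ≤ _ := hamgm
  calc Real.sqrt ((r + 2 * s : ℝ) / 2) * η = Real.sqrt ((r + 2 * s : ℝ) / 2 * η ^ 2) := by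
        rw [Real.sqrt_mul (by positivity), Real.sqrt_sq hη.le]
    _ ≤ Real.sqrt Q := by
        gcongr
        rw [le_div_iff₀ hdR] at hη2
        linarith

/-- Let r, s not both be zero, d = r + 2s, and let
φ(z) = (ξ_1 z_1, …, ξ_{r+s} z_{r+s}) with ξ_i > 0 and ∏ ξ_i^{d_i} = 1
(d_i = 1 at real coordinates, 2 at complex ones). If
∏ |z_i|^{d_i} ≥ η^d for some η > 0, then the Euclidean norm of φ(z)
is at least √(d/2)·η. -/
theorem statement3 (r s : ℕ) (hrs : 0 < r + s) (η : ℝ) (hη : 0 < η)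
    (ξx : Fin r → ℝ) (ξy : Fin s → ℝ)
    (hξx : ∀ i, 0 < ξx i) (hξy : ∀ j, 0 < ξy j)
    (hdet : (∏ i, ξx i) * ∏ j, (ξy j) ^ 2 = 1)
    (x : Fin r → ℝ) (y : Fin s → ℂ)
    (hnorm : η ^ (r + 2 * s) ≤ (∏ i, |x i|) * ∏ j, ‖y j‖ ^ 2) :
    Real.sqrt ((r + 2 * s : ℝ) / 2) * η ≤
      Real.sqrt ((∑ i, (ξx i * x i) ^ 2) + ∑ j, ‖(ξy j : ℂ) * y j‖ ^ 2) :=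
  statement3_general r s hrs η hη ξx ξy hdet x y hnorm
end

section
/- For T ≥ 1, n ≥ 1, nonnegative integers r', s' not both zero, and q' = r' + s' − 1, the (r'+2s')n-dimensional Lebesgue volume of the set {(x_1,…,x_{r'}, y_1,…,y_{s'}) ∈ (ℝ^n)^{r'} × (ℂ^n)^{s'} : ∏_{i} |x_i|_∞ · ∏_{j} |y_j|_∞² ≤ T and |x_i|_∞ ≥ 1, |y_j|_∞ ≥ 1 for all i, j} equals 2^{r'n} π^{s'n} (−1)^{q'} ( −1 + T^n Σ_{i=0}^{q'} (−log T^n)^i / i! ). -/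
/-!
Pushing a Haar measure `μ` on a real space of dimension `d` forward along `x ↦ ‖x‖ ^ d` gives
`μ (closedBall 0 1)` times Lebesgue measure on `(0, ∞)`, by homogeneity. Hence
`z ↦ (‖x_i‖ ^ n, ‖y_j‖ ^ (2n))` carries the set onto `{w ∈ [1, ∞) ^ (r' + s') | ∏ w ≤ T ^ n}`
and scales volumes by `2 ^ (r' n) π ^ (s' n)`. Slicing off one coordinate, the volume `V_m (S)` of
`{w ∈ [1, ∞) ^ m | ∏ w ≤ S}` satisfies `V_(m+1) (S) = ∫ x in 1..S, V_m (S / x)`, and the closed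
form follows by induction because `x ↦ ∑_{i ≤ q+1} x ^ i / i!` has derivative
`∑_{i ≤ q} x ^ i / i!`.
-/

open MeasureTheory Real Set Metric
open scoped ENNReal NNReal

noncomputable def expPartialSum (q : ℕ) (x : ℝ) : ℝ :=
  ∑ i ∈ Finset.range (q + 1), x ^ i / i.factorial

theorem expPartialSum_zero_left (x : ℝ) : expPartialSum 0 x = 1 := by
  simp [expPartialSum]

theorem expPartialSum_zero_right (q : ℕ) : expPartialSum q 0 = 1 := by
  simp [expPartialSum, Finset.sum_range_succ']

theorem hasDerivAt_expPartialSum_succ (q : ℕ) (x : ℝ) :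
    HasDerivAt (expPartialSum (q + 1)) (expPartialSum q x) x := by
  have hterm (i : ℕ) : HasDerivAt (fun x : ℝ => x ^ (i + 1) / (i + 1).factorial)
      (x ^ i / i.factorial) x := by
    refine ((hasDerivAt_pow (i + 1) x).div_const ((i + 1).factorial : ℝ)).congr_deriv ?_
    rw [Nat.factorial_succ]
    push_cast
    field_simp
  unfold expPartialSum
  simp_rw [Finset.sum_range_succ' _ (q + 1)]
  simpa using (HasDerivAt.fun_sum fun i _ => hterm i).add_const 1

def hyperbolicRegion (ι : Type*) [Fintype ι] (S : ℝ) : Set (ι → ℝ) :=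
  {w | (∀ i, 1 ≤ w i) ∧ ∏ i, w i ≤ S}

theorem measurableSet_hyperbolicRegion (ι : Type*) [Fintype ι] (S : ℝ) :
    MeasurableSet (hyperbolicRegion ι S) := by
  unfold hyperbolicRegion
  measurability

/-- For `S ≥ 1`, the volume of `hyperbolicRegion (Fin (q + 1)) S` (note the shift by one). -/
noncomputable def hyperbolicVolume (q : ℕ) (S : ℝ) : ℝ :=
  (-1) ^ q * (-1 + S * expPartialSum q (-log S))

theorem hyperbolicVolume_zero (S : ℝ) : hyperbolicVolume 0 S = S - 1 := by
  simp [hyperbolicVolume, expPartialSum_zero_left]; ring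

theorem continuousOn_hyperbolicVolume_div (q : ℕ) {S : ℝ} (hS : S ≠ 0) :
    ContinuousOn (fun x => hyperbolicVolume q (S / x)) (Ioi 0) := by
  unfold hyperbolicVolume expPartialSum
  fun_prop (disch := intro x hx; first | exact ne_of_gt hx | exact div_ne_zero hS (ne_of_gt hx))

theorem integral_hyperbolicVolume_div (q : ℕ) {S : ℝ} (hS : 0 < S) :
    ∫ x in (1 : ℝ)..S, hyperbolicVolume q (S / x) = hyperbolicVolume (q + 1) S := by
  have hpos : ∀ x ∈ uIcc (1 : ℝ) S, 0 < x := fun x hx =>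
    lt_of_lt_of_le (lt_min one_pos hS) hx.1
  let A : ℝ → ℝ := fun x => (-1) ^ q * (-x + S * expPartialSum (q + 1) (log x - log S))
  have hA : ∀ x ∈ uIcc (1 : ℝ) S, HasDerivAt A (hyperbolicVolume q (S / x)) x := by
    intro x hx
    have hx0 := hpos x hx
    have hlog := ((hasDerivAt_log hx0.ne').sub_const (log S))
    refine (((hasDerivAt_id x).neg.add (((hasDerivAt_expPartialSum_succ q _).comp x hlog).const_mul
      S)).const_mul ((-1) ^ q)).congr_deriv ?_
    simp only [hyperbolicVolume, log_div hS.ne' hx0.ne', neg_sub]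
    field_simp
  rw [intervalIntegral.integral_eq_sub_of_hasDerivAt hA
    ((continuousOn_hyperbolicVolume_div q hS.ne').mono hpos).intervalIntegrable]
  simp only [A, hyperbolicVolume, log_one, sub_self, zero_sub, expPartialSum_zero_right]
  ring

theorem hyperbolicVolume_nonneg (q : ℕ) {S : ℝ} (hS : 1 ≤ S) : 0 ≤ hyperbolicVolume q S := by
  induction q generalizing S with
  | zero => rw [hyperbolicVolume_zero]; linarith
  | succ q ih =>
    rw [← integral_hyperbolicVolume_div q (by linarith)]
    exact intervalIntegral.integral_nonneg hS fun x hx =>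
      ih ((one_le_div (by linarith [hx.1])).2 hx.2)

theorem volume_hyperbolicRegion_fin_succ (m : ℕ) (S : ℝ) :
    volume (hyperbolicRegion (Fin (m + 1)) S) =
      ∫⁻ x in Icc 1 S, volume (hyperbolicRegion (Fin m) (S / x)) := by
  let A : Set (ℝ × (Fin m → ℝ)) := {p | 1 ≤ p.1 ∧ (∀ j, 1 ≤ p.2 j) ∧ p.1 * ∏ j, p.2 j ≤ S}
  have hA : MeasurableSet A := by measurability
  have hpre : hyperbolicRegion (Fin (m + 1)) S =
      MeasurableEquiv.piFinSuccAbove (fun _ => ℝ) 0 ⁻¹' A := by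
    ext w
    simp [hyperbolicRegion, A, Fin.forall_fin_succ, Fin.prod_univ_succ, Fin.tail, and_assoc]
  have hslice (x : ℝ) : volume (Prod.mk x ⁻¹' A) =
      (Icc 1 S).indicator (fun x => volume (hyperbolicRegion (Fin m) (S / x))) x := by
    by_cases hx : x ∈ Icc 1 S
    · have hx0 : 0 < x := by linarith [hx.1]
      rw [indicator_of_mem hx]
      congr 1
      ext v
      simp [A, hyperbolicRegion, hx.1, le_div_iff₀ hx0, mul_comm]
    · rw [indicator_of_notMem hx, measure_eq_zero_iff_ae_notMem.2 ?_]
      refine Filter.Eventually.of_forall fun v ⟨h1, hv, hle⟩ => hx ⟨h1, ?_⟩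
      nlinarith [Finset.one_le_prod fun j (_ : j ∈ Finset.univ) => hv j]
  rw [hpre, (volume_preserving_piFinSuccAbove (fun _ => ℝ) 0).measure_preimage
    hA.nullMeasurableSet, Measure.volume_eq_prod, Measure.prod_apply hA]
  simp_rw [hslice]
  exact lintegral_indicator measurableSet_Icc _

theorem volume_hyperbolicRegion_fin (q : ℕ) {S : ℝ} (hS : 1 ≤ S) :
    volume (hyperbolicRegion (Fin (q + 1)) S) = .ofReal (hyperbolicVolume q S) := by
  induction q generalizing S with
  | zero =>
    have hH (x : ℝ) (hx : x ∈ Icc 1 S) : hyperbolicRegion (Fin 0) (S / x) = univ := by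
      ext w
      simpa [hyperbolicRegion] using (one_le_div (by linarith [hx.1])).2 hx.2
    rw [volume_hyperbolicRegion_fin_succ, setLIntegral_congr_fun (g := fun _ => 1) measurableSet_Icc
      fun x hx => by simp [hH x hx, volume_pi], setLIntegral_one, Real.volume_Icc,
      hyperbolicVolume_zero]
  | succ q ih =>
    have hSx {x : ℝ} (hx : x ∈ Icc 1 S) : 1 ≤ S / x := (one_le_div (by linarith [hx.1])).2 hx.2
    have hint : IntegrableOn (fun x => hyperbolicVolume q (S / x)) (Icc 1 S) :=
      ((continuousOn_hyperbolicVolume_div q (by positivity)).mono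
          fun x hx => mem_Ioi.2 (by linarith [hx.1])).integrableOn_compact isCompact_Icc
    rw [volume_hyperbolicRegion_fin_succ, setLIntegral_congr_fun measurableSet_Icc
      fun x hx => ih (hSx hx), ← ofReal_integral_eq_lintegral_ofReal hint
      ((ae_restrict_iff' measurableSet_Icc).2
        (.of_forall fun x hx => hyperbolicVolume_nonneg q (hSx hx))),
      integral_Icc_eq_integral_Ioc, ← intervalIntegral.integral_of_le hS,
      integral_hyperbolicVolume_div q (by linarith)]

theorem volume_hyperbolicRegion_congr {ι κ : Type*} [Fintype ι] [Fintype κ] (e : ι ≃ κ)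
    (S : ℝ) : volume (hyperbolicRegion ι S) = volume (hyperbolicRegion κ S) := by
  let P := MeasurableEquiv.piCongrLeft (fun _ : κ => ℝ) e
  have hpre : P ⁻¹' hyperbolicRegion κ S = hyperbolicRegion ι S := by
    ext w
    have hP (i : ι) : P w (e i) = w i := Equiv.piCongrLeft_apply_apply (fun _ => ℝ) e w i
    simp only [hyperbolicRegion, mem_preimage, mem_ofPred_eq, ← e.forall_congr_right,
      ← e.prod_comp, hP]
  rw [← hpre, (volume_measurePreserving_piCongrLeft (fun _ => ℝ) e).measure_preimage
    (measurableSet_hyperbolicRegion κ S).nullMeasurableSet]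

theorem volume_hyperbolicRegion {ι : Type*} [Fintype ι] {q : ℕ} (hι : Fintype.card ι = q + 1)
    {S : ℝ} (hS : 1 ≤ S) :
    volume (hyperbolicRegion ι S) = .ofReal (hyperbolicVolume q S) := by
  rw [volume_hyperbolicRegion_congr (Fintype.equivFinOfCardEq hι),
    volume_hyperbolicRegion_fin q hS]

theorem MeasureTheory.Measure.ext_of_Iic_of_ne_top {α : Type*} [TopologicalSpace α]
    [MeasurableSpace α] [SecondCountableTopology α] [LinearOrder α] [OrderTopology α]
    [BorelSpace α] [NoMinOrder α]
    (μ ν : Measure α) (hμ : ∀ b, μ (Iic b) ≠ ∞) (h : ∀ b, μ (Iic b) = ν (Iic b)) : μ = ν := by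
  refine Measure.ext_of_Ioc' μ ν (fun a b _ => ne_top_of_le_ne_top (hμ b)
    (measure_mono Ioc_subset_Iic_self)) fun a b hab => ?_
  rw [← Iic_sdiff_Iic, measure_sdiff (Iic_subset_Iic.2 hab.le) measurableSet_Iic.nullMeasurableSet
    (hμ a), measure_sdiff (Iic_subset_Iic.2 hab.le) measurableSet_Iic.nullMeasurableSet
    (h a ▸ hμ a), h a, h b]

theorem MeasureTheory.Measure.pi_nnreal_smul {ι α : Type*} [Fintype ι] [MeasurableSpace α]
    (ν : Measure α) [SigmaFinite ν] (c : ℝ≥0) :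
    Measure.pi (fun _ : ι => c • ν) = c ^ Fintype.card ι • Measure.pi fun _ => ν := by
  refine Measure.pi_eq fun s _ => ?_
  simp only [Measure.smul_apply, Measure.pi_pi, ENNReal.smul_def, smul_eq_mul,
    Finset.prod_mul_distrib, Finset.prod_const, Finset.card_univ, ENNReal.coe_pow]

section NormPow

variable {E : Type*} [NormedAddCommGroup E] [NormedSpace ℝ E] [MeasurableSpace E] [BorelSpace E]
  [FiniteDimensional ℝ E] [Nontrivial E] (μ : Measure E) [μ.IsAddHaarMeasure]

theorem addHaar_setOf_norm_pow_finrank_le (b : ℝ) :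
    μ {x | ‖x‖ ^ Module.finrank ℝ E ≤ b} = .ofReal b * μ (closedBall 0 1) := by
  have hd : Module.finrank ℝ E ≠ 0 := Module.finrank_pos.ne'
  rcases lt_or_ge b 0 with hb | hb
  · have : {x : E | ‖x‖ ^ Module.finrank ℝ E ≤ b} = ∅ :=
      eq_empty_of_forall_notMem fun x hx => (hb.trans_le (pow_nonneg (norm_nonneg x) _)).not_ge hx
    rw [this, ENNReal.ofReal_of_nonpos hb.le, measure_empty, zero_mul]
  · have hroot := rpow_inv_natCast_pow hb hd
    have : {x : E | ‖x‖ ^ Module.finrank ℝ E ≤ b} =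
        closedBall 0 (b ^ (Module.finrank ℝ E : ℝ)⁻¹) := by
      ext x
      rw [mem_ofPred_eq, mem_closedBall_zero_iff, ← pow_le_pow_iff_left₀ (norm_nonneg x)
        (by positivity) hd, hroot]
    rw [this, Measure.addHaar_closedBall' μ 0 (by positivity), hroot]

theorem map_norm_pow_finrank :
    μ.map (fun x => ‖x‖ ^ Module.finrank ℝ E) = μ (closedBall 0 1) • volume.restrict (Ioi 0) := by
  have hmeas : Measurable fun x : E => ‖x‖ ^ Module.finrank ℝ E := by fun_prop
  refine Measure.ext_of_Iic_of_ne_top _ _ (fun b => ?_) fun b => ?_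
  · rw [Measure.map_apply hmeas measurableSet_Iic]
    exact ((addHaar_setOf_norm_pow_finrank_le μ b).trans_lt
      (ENNReal.mul_lt_top ENNReal.ofReal_lt_top measure_closedBall_lt_top)).ne
  · rw [Measure.map_apply hmeas measurableSet_Iic, Measure.smul_apply,
      Measure.restrict_apply measurableSet_Iic, Iic_inter_Ioi, Real.volume_Ioc, sub_zero,
      smul_eq_mul, mul_comm]
    exact addHaar_setOf_norm_pow_finrank_le μ b

theorem map_pi_norm_pow_finrank (ι : Type*) [Fintype ι] {c : ℝ≥0} (hc : μ (closedBall 0 1) = c) :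
    (Measure.pi fun _ : ι => μ).map (fun x i => ‖x i‖ ^ Module.finrank ℝ E) =
      c ^ Fintype.card ι • (Measure.pi fun _ : ι => volume).restrict (univ.pi fun _ => Ioi 0) := by
  have hmap := map_norm_pow_finrank μ
  rw [hc, ← ENNReal.smul_def] at hmap
  have : SigmaFinite (μ.map fun x => ‖x‖ ^ Module.finrank ℝ E) := hmap ▸ inferInstance
  rw [Measure.pi_map_pi (f := fun (_ : ι) (x : E) => ‖x‖ ^ Module.finrank ℝ E)
    fun _ => by fun_prop, hmap, Measure.restrict_pi_pi, Measure.pi_nnreal_smul]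

end NormPow

theorem map_prodMap_norm_pow_finrank {E F : Type*} [NormedAddCommGroup E] [NormedSpace ℝ E]
    [MeasureSpace E] [BorelSpace E] [FiniteDimensional ℝ E] [Nontrivial E]
    [(volume : Measure E).IsAddHaarMeasure] [NormedAddCommGroup F] [NormedSpace ℝ F]
    [MeasureSpace F] [BorelSpace F] [FiniteDimensional ℝ F] [Nontrivial F]
    [(volume : Measure F).IsAddHaarMeasure] (ι κ : Type*) [Fintype ι] [Fintype κ]
    {cE cF : ℝ≥0} (hE : volume (closedBall (0 : E) 1) = cE)
    (hF : volume (closedBall (0 : F) 1) = cF) :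
    (volume : Measure ((ι → E) × (κ → F))).map
        (Prod.map (fun x i => ‖x i‖ ^ Module.finrank ℝ E) fun y j => ‖y j‖ ^ Module.finrank ℝ F) =
      (cE ^ Fintype.card ι * cF ^ Fintype.card κ) •
        volume.restrict ((univ.pi fun _ => Ioi 0) ×ˢ (univ.pi fun _ => Ioi 0)) := by
  rw [Measure.volume_eq_prod, ← Measure.map_prod_map _ _ (by fun_prop) (by fun_prop),
    volume_pi, volume_pi, map_pi_norm_pow_finrank _ ι hE, map_pi_norm_pow_finrank _ κ hF,
    Measure.prod_smul_left, Measure.prod_smul_right, smul_smul, Measure.prod_restrict,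
    Measure.volume_eq_prod, volume_pi, volume_pi, mul_comm]

theorem volume_setOf_prod_norm_pow_finrank_le {E F : Type*} [NormedAddCommGroup E]
    [NormedSpace ℝ E] [MeasureSpace E] [BorelSpace E] [FiniteDimensional ℝ E] [Nontrivial E]
    [(volume : Measure E).IsAddHaarMeasure] [NormedAddCommGroup F] [NormedSpace ℝ F]
    [MeasureSpace F] [BorelSpace F] [FiniteDimensional ℝ F] [Nontrivial F]
    [(volume : Measure F).IsAddHaarMeasure] {ι κ : Type*} [Fintype ι] [Fintype κ] {q : ℕ}
    (hcard : Fintype.card ι + Fintype.card κ = q + 1)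
    {cE cF : ℝ≥0} (hE : volume (closedBall (0 : E) 1) = cE)
    (hF : volume (closedBall (0 : F) 1) = cF) {S : ℝ} (hS : 1 ≤ S) :
    volume {z : (ι → E) × (κ → F) | (∀ i, 1 ≤ ‖z.1 i‖) ∧ (∀ j, 1 ≤ ‖z.2 j‖) ∧
        (∏ i, ‖z.1 i‖ ^ Module.finrank ℝ E) * (∏ j, ‖z.2 j‖ ^ Module.finrank ℝ F) ≤ S} =
      (cE ^ Fintype.card ι * cF ^ Fintype.card κ : ℝ≥0) * .ofReal (hyperbolicVolume q S) := by
  let e := MeasurableEquiv.sumPiEquivProdPi fun _ : ι ⊕ κ => ℝ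
  let R := e.symm ⁻¹' hyperbolicRegion (ι ⊕ κ) S
  have hR : MeasurableSet R := e.symm.measurable (measurableSet_hyperbolicRegion _ S)
  have hvolR : volume R = volume (hyperbolicRegion (ι ⊕ κ) S) :=
    (volume_measurePreserving_sumPiEquivProdPi_symm _).measure_preimage
      (measurableSet_hyperbolicRegion _ S).nullMeasurableSet
  have hRpos : R ⊆ (univ.pi fun _ => Ioi 0) ×ˢ (univ.pi fun _ => Ioi 0) := by
    intro p hp
    exact ⟨fun i _ => one_pos.trans_le (hp.1 (.inl i)), fun j _ => one_pos.trans_le (hp.1 (.inr j))⟩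
  have hset : {z : (ι → E) × (κ → F) | (∀ i, 1 ≤ ‖z.1 i‖) ∧ (∀ j, 1 ≤ ‖z.2 j‖) ∧
        (∏ i, ‖z.1 i‖ ^ Module.finrank ℝ E) * (∏ j, ‖z.2 j‖ ^ Module.finrank ℝ F) ≤ S} =
      Prod.map (fun x i => ‖x i‖ ^ Module.finrank ℝ E)
        (fun y j => ‖y j‖ ^ Module.finrank ℝ F) ⁻¹' R := by
    ext z
    simp [R, e, hyperbolicRegion, Fintype.prod_sum_type, MeasurableEquiv.coe_sumPiEquivProdPi_symm,
      one_le_pow_iff_of_nonneg (norm_nonneg _) Module.finrank_pos.ne', and_assoc]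
  rw [hset, ← Measure.map_apply (by fun_prop) hR, map_prodMap_norm_pow_finrank ι κ hE hF,
    Measure.smul_apply, Measure.restrict_apply hR, inter_eq_left.2 hRpos,
    hvolR, volume_hyperbolicRegion (by simpa using hcard) hS, ENNReal.smul_def, smul_eq_mul]

theorem volume_pi_closedBall_zero_one_real (n : ℕ) :
    volume (closedBall (0 : Fin n → ℝ) 1) = ((2 ^ n : ℝ≥0) : ℝ≥0∞) := by
  simp [Real.volume_pi_closedBall]

theorem volume_pi_closedBall_zero_one_complex (n : ℕ) :
    volume (closedBall (0 : Fin n → ℂ) 1) = ((NNReal.pi ^ n : ℝ≥0) : ℝ≥0∞) := by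
  simp [closedBall_pi _ zero_le_one, volume_pi_pi, Complex.volume_closedBall]

/-- for T ≥ 1, n ≥ 1, r', s' not both zero and q' = r' + s' − 1,
the volume of {(x,y) ∈ (ℝ^n)^{r'} × (ℂ^n)^{s'} : ∏|x_i|_∞ ∏|y_j|_∞² ≤ T and all
|x_i|_∞, |y_j|_∞ ≥ 1} equals
2^{r'n} π^{s'n} (−1)^{q'} (−1 + T^n Σ_{i=0}^{q'} (−log T^n)^i / i!).
Here |·|_∞ is the sup norm (the default norm on the pi types `Fin n → ℝ`
and `Fin n → ℂ`). -/
theorem statement6 (r' s' n : ℕ) (hrs : 0 < r' + s') (hn : 1 ≤ n)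
    (T : ℝ) (hT : 1 ≤ T) :
    (volume {z : (Fin r' → (Fin n → ℝ)) × (Fin s' → (Fin n → ℂ)) |
        (∏ i, ‖z.1 i‖) * (∏ j, ‖z.2 j‖ ^ 2) ≤ T ∧
        (∀ i, 1 ≤ ‖z.1 i‖) ∧ (∀ j, 1 ≤ ‖z.2 j‖)}).toReal =
      2 ^ (r' * n) * π ^ (s' * n) * (-1 : ℝ) ^ (r' + s' - 1) *
        (-1 + T ^ n * ∑ i ∈ Finset.range ((r' + s' - 1) + 1),
          (-Real.log (T ^ n)) ^ i / (Nat.factorial i)) := by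
  have : NeZero n := ⟨by omega⟩
  have hdimR : Module.finrank ℝ (Fin n → ℝ) = n := Module.finrank_fin_fun ℝ
  have hdimC : Module.finrank ℝ (Fin n → ℂ) = 2 * n := by
    simp [Module.finrank_pi_fintype, Complex.finrank_real_complex, mul_comm]
  have hset : {z : (Fin r' → (Fin n → ℝ)) × (Fin s' → (Fin n → ℂ)) |
        (∏ i, ‖z.1 i‖) * (∏ j, ‖z.2 j‖ ^ 2) ≤ T ∧ (∀ i, 1 ≤ ‖z.1 i‖) ∧ (∀ j, 1 ≤ ‖z.2 j‖)} =
      {z | (∀ i, 1 ≤ ‖z.1 i‖) ∧ (∀ j, 1 ≤ ‖z.2 j‖) ∧ (∏ i, ‖z.1 i‖ ^ Module.finrank ℝ (Fin n → ℝ)) *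
        (∏ j, ‖z.2 j‖ ^ Module.finrank ℝ (Fin n → ℂ)) ≤ T ^ n} := by
    ext z
    have hpow : ((∏ i, ‖z.1 i‖) * ∏ j, ‖z.2 j‖ ^ 2) ^ n =
        (∏ i, ‖z.1 i‖ ^ n) * ∏ j, ‖z.2 j‖ ^ (2 * n) := by
      simp only [mul_pow, ← Finset.prod_pow, ← pow_mul]
    rw [mem_ofPred_eq, mem_ofPred_eq, hdimR, hdimC, ← hpow,
      pow_le_pow_iff_left₀ (by positivity) (by positivity) (NeZero.ne n)]
    tauto
  rw [hset, volume_setOf_prod_norm_pow_finrank_le (q := r' + s' - 1) (by simp; omega)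
    (volume_pi_closedBall_zero_one_real n) (volume_pi_closedBall_zero_one_complex n)
    (one_le_pow₀ hT), ENNReal.toReal_mul, ENNReal.toReal_ofReal
    (hyperbolicVolume_nonneg _ (one_le_pow₀ hT))]
  simp only [hyperbolicVolume, expPartialSum, Fintype.card_fin, ENNReal.coe_toReal, NNReal.coe_mul,
    NNReal.coe_pow, NNReal.coe_ofNat, NNReal.coe_real_pi]
  ring
end

section
/- Let n = 1, r', s' nonnegative integers with s' ≥ 1, and define V_{0,s'}(T) as the volume of {(y_1,…,y_{s'}) ∈ ℂ^{s'} : ∏|y_j|² ≤ T, |y_j| ≥ 1 for all j} for T ≥ 1. Then V_{0,s'}(T) = π^{s'} ( (−1)^{s'} + Σ_{i=0}^{s'−1} (−1)^{s'−1−i} T (log T)^i / i! ). -/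
/-!
Splitting off the first coordinate, Fubini gives the recursion
`V_{s+1}(T) = ∫_{|z| ≥ 1} V_s(T / |z|²) dz = π ∫_1^T V_s(T / u) du`,
the second step by polar coordinates and `u = r²`. With `V_s = π^s G_s` this reads
`G_{s+1}(T) = ∫_1^T G_s(T / u) du`, and the claimed `G_{s+1}` satisfies it because
`u ↦ (-1)^s u - T P_{s+1}(log T - log u)` is an antiderivative of `u ↦ G_s(T / u)`, where
`P_s(x) = ∑_{i<s} (-1)^(s-1-i) x^i / i!` satisfies `P_{s+1}' = P_s`.
-/

open MeasureTheory Real Set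
open scoped ENNReal Nat

theorem volume_eq_lintegral_volume_fin_cons {α : Type*} [MeasureSpace α]
    [SigmaFinite (volume : Measure α)] {n : ℕ} {A : Set (Fin (n + 1) → α)}
    (hA : MeasurableSet A) :
    volume A = ∫⁻ z, volume {y : Fin n → α | Fin.cons z y ∈ A} := by
  have e := (volume_preserving_piFinSuccAbove (fun _ : Fin (n + 1) => α) 0).symm
  rw [← e.measure_preimage hA.nullMeasurableSet, Measure.volume_eq_prod,
    Measure.prod_apply (hA.preimage e.measurable)]
  simp [MeasurableEquiv.piFinSuccAbove_symm_apply]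
  rfl

theorem lintegral_comp_norm_sq {f : ℝ → ℝ≥0∞} (hf : Measurable f) :
    ∫⁻ z : ℂ, f (‖z‖ ^ 2) = ENNReal.ofReal π * ∫⁻ u in Ioi 0, f u := by
  have hsq : (fun r : ℝ => r ^ 2) '' Ioi 0 = Ioi 0 := by
    ext u
    refine ⟨?_, fun hu => ⟨√u, sqrt_pos.2 hu, sq_sqrt hu.le⟩⟩
    rintro ⟨r, hr, rfl⟩
    exact pow_pos (mem_Ioi.1 hr) 2
  have hsubst : ∫⁻ u in Ioi 0, f u = ∫⁻ r in Ioi 0, ENNReal.ofReal (2 * r) * f (r ^ 2) := by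
    conv_lhs => rw [← hsq]
    exact lintegral_image_eq_lintegral_deriv_mul_of_monotoneOn measurableSet_Ioi
      (fun r _ => by simpa using (hasDerivAt_pow 2 r).hasDerivWithinAt)
      (fun a ha b _ hab => pow_le_pow_left₀ (le_of_lt ha) hab 2) f
  have hpolar : ∀ p ∈ Ioi (0 : ℝ) ×ˢ Ioo (-π) π,
      ENNReal.ofReal p.1 • f (‖Complex.polarCoord.symm p‖ ^ 2) =
        ENNReal.ofReal p.1 * f (p.1 ^ 2) := fun p hp => by
    simp [abs_of_pos (mem_Ioi.1 hp.1)]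
  rw [← Complex.lintegral_comp_polarCoord_symm, polarCoord_target,
    setLIntegral_congr_fun (measurableSet_Ioi.prod measurableSet_Ioo) hpolar,
    Measure.volume_eq_prod, ← Measure.prod_restrict, lintegral_prod _ (by fun_prop), hsubst]
  simp only [lintegral_const, Measure.restrict_apply_univ, Real.volume_Ioo]
  rw [lintegral_mul_const' _ _ ENNReal.ofReal_ne_top]
  simp_rw [ENNReal.ofReal_mul zero_le_two, mul_assoc]
  rw [lintegral_const_mul' _ _ ENNReal.ofReal_ne_top, show π - -π = 2 * π by ring,
    ENNReal.ofReal_mul zero_le_two]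
  ring

noncomputable def signedExpSum (s : ℕ) (x : ℝ) : ℝ :=
  ∑ i ∈ Finset.range s, (-1) ^ (s - 1 - i) * x ^ i / i !

/-- `V_{0,s}(T) / π ^ s`. -/
noncomputable def reducedVolume (s : ℕ) (T : ℝ) : ℝ :=
  (-1) ^ s + T * signedExpSum s (log T)

theorem signedExpSum_succ_zero (s : ℕ) : signedExpSum (s + 1) 0 = (-1) ^ s := by
  simp [signedExpSum, Finset.sum_range_succ']

theorem hasDerivAt_signedExpSum_succ (s : ℕ) (x : ℝ) :
    HasDerivAt (signedExpSum (s + 1)) (signedExpSum s x) x := by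
  have hsum := HasDerivAt.fun_sum (u := Finset.range (s + 1)) fun i _ =>
    ((hasDerivAt_pow i x).const_mul ((-1 : ℝ) ^ (s - i))).div_const (i ! : ℝ)
  have hfun : signedExpSum (s + 1) = fun y =>
      ∑ i ∈ Finset.range (s + 1), (-1 : ℝ) ^ (s - i) * y ^ i / i ! := by
    ext y
    simp [signedExpSum]
  rw [hfun]
  refine hsum.congr_deriv ?_
  rw [Finset.sum_range_succ', signedExpSum]
  simp only [Nat.cast_zero, zero_mul, mul_zero, zero_div, add_zero]
  refine Finset.sum_congr rfl fun i _ => ?_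
  rw [show s - (i + 1) = s - 1 - i by omega, Nat.factorial_succ]
  push_cast
  field_simp

theorem continuousOn_reducedVolume_div (s : ℕ) {T : ℝ} (hT : T ≠ 0) :
    ContinuousOn (fun u => reducedVolume s (T / u)) (Ioi 0) := by
  unfold reducedVolume signedExpSum
  fun_prop (disch := intros; simp_all; positivity)

theorem integral_reducedVolume_div {s : ℕ} {T : ℝ} (hT : 1 ≤ T) :
    ∫ u in (1 : ℝ)..T, reducedVolume s (T / u) = reducedVolume (s + 1) T := by
  have hT0 : 0 < T := zero_lt_one.trans_le hT
  have hderiv : ∀ u ∈ uIcc 1 T, HasDerivAt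
      (fun u => (-1) ^ s * u - T * signedExpSum (s + 1) (log T - log u))
      (reducedVolume s (T / u)) u := by
    intro u hu
    have hu0 : 0 < u := zero_lt_one.trans_le (uIcc_of_le hT ▸ hu).1
    refine (((hasDerivAt_id u).const_mul ((-1 : ℝ) ^ s)).sub
      (((hasDerivAt_signedExpSum_succ s _).comp u
        ((hasDerivAt_log hu0.ne').const_sub (log T))).const_mul T)).congr_deriv ?_
    rw [reducedVolume, log_div hT0.ne' hu0.ne']
    field_simp
    ring
  have hint : IntervalIntegrable (fun u => reducedVolume s (T / u)) volume 1 T :=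
    ((continuousOn_reducedVolume_div s hT0.ne').mono fun u hu =>
      zero_lt_one.trans_le (uIcc_of_le hT ▸ hu).1).intervalIntegrable
  rw [intervalIntegral.integral_eq_sub_of_hasDerivAt hderiv hint]
  simp only [reducedVolume, log_one, sub_self, sub_zero, signedExpSum_succ_zero, pow_succ]
  ring

theorem reducedVolume_nonneg (s : ℕ) {T : ℝ} (hT : 1 ≤ T) : 0 ≤ reducedVolume s T := by
  induction s generalizing T with
  | zero => simp [reducedVolume, signedExpSum]
  | succ s ih =>
    rw [← integral_reducedVolume_div hT]
    refine intervalIntegral.integral_nonneg hT fun u hu => ih ?_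
    rw [one_le_div (zero_lt_one.trans_le hu.1)]
    exact hu.2

def normProdRegion (s : ℕ) (T : ℝ) : Set (Fin s → ℂ) :=
  {y | (∏ j, ‖y j‖ ^ 2) ≤ T ∧ ∀ j, 1 ≤ ‖y j‖}

theorem isClosed_normProdRegion (s : ℕ) (T : ℝ) : IsClosed (normProdRegion s T) := by
  simp only [normProdRegion, ofPred_and, ofPred_forall]
  exact (isClosed_le (by fun_prop) continuous_const).inter
    (isClosed_iInter fun j => isClosed_le continuous_const (by fun_prop))

theorem normProdRegion_eq_empty (s : ℕ) {T : ℝ} (hT : T < 1) : normProdRegion s T = ∅ := by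
  refine eq_empty_of_forall_notMem fun y ⟨hprod, hy⟩ => hT.not_ge (le_trans ?_ hprod)
  exact Finset.one_le_prod fun j _ => one_le_pow₀ (hy j)

theorem cons_mem_normProdRegion_succ {s : ℕ} {T : ℝ} {z : ℂ} {y : Fin s → ℂ} :
    (Fin.cons z y : Fin (s + 1) → ℂ) ∈ normProdRegion (s + 1) T ↔
      1 ≤ ‖z‖ ∧ y ∈ normProdRegion s (T / ‖z‖ ^ 2) := by
  simp only [normProdRegion, mem_ofPred_eq, Fin.prod_univ_succ, Fin.forall_fin_succ,
    Fin.cons_zero, Fin.cons_succ]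
  constructor
  · rintro ⟨hprod, hz, hy⟩
    exact ⟨hz, (le_div_iff₀' (by positivity)).2 hprod, hy⟩
  · rintro ⟨hz, hprod, hy⟩
    exact ⟨(le_div_iff₀' (by positivity)).1 hprod, hz, hy⟩

theorem volume_setOf_cons_mem_normProdRegion_succ {s : ℕ} {T : ℝ} {g : ℝ → ℝ≥0∞}
    (hg : ∀ x, 1 ≤ x → volume (normProdRegion s x) = g x) (z : ℂ) :
    volume {y | (Fin.cons z y : Fin (s + 1) → ℂ) ∈ normProdRegion (s + 1) T} =
      (Icc 1 T).indicator (fun u => g (T / u)) (‖z‖ ^ 2) := by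
  simp_rw [cons_mem_normProdRegion_succ]
  by_cases hz : 1 ≤ ‖z‖
  · have hz2 : 0 < ‖z‖ ^ 2 := by positivity
    simp only [hz, true_and, ofPred_mem_eq]
    by_cases hzT : ‖z‖ ^ 2 ≤ T
    · rw [hg _ ((one_le_div hz2).2 hzT),
        indicator_of_mem (show ‖z‖ ^ 2 ∈ Icc 1 T from ⟨one_le_pow₀ hz, hzT⟩)]
    · rw [normProdRegion_eq_empty s ((div_lt_one hz2).2 (not_le.1 hzT)),
        indicator_of_notMem fun h => hzT h.2, measure_empty]
  · rw [indicator_of_notMem fun h =>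
      hz ((one_le_pow_iff_of_nonneg (norm_nonneg z) two_ne_zero).1 h.1)]
    simp [hz]

theorem volume_normProdRegion (s : ℕ) {T : ℝ} (hT : 1 ≤ T) :
    volume (normProdRegion s T) = ENNReal.ofReal (π ^ s * reducedVolume s T) := by
  induction s generalizing T with
  | zero =>
    have huniv : normProdRegion 0 T = univ := by simp [normProdRegion, hT]
    simp [huniv, reducedVolume, signedExpSum, volume_pi]
  | succ s ih =>
    set g : ℝ → ℝ := fun u => π ^ s * reducedVolume s (T / u)
    have hg_meas : Measurable fun u => ENNReal.ofReal (g u) := by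
      simp only [g, reducedVolume, signedExpSum]
      fun_prop
    have hg_cont : ContinuousOn g (Icc 1 T) :=
      (continuous_const.continuousOn.mul (continuousOn_reducedVolume_div s (by positivity))).mono
        fun u hu => zero_lt_one.trans_le hu.1
    have hg_nonneg : ∀ u ∈ Icc 1 T, 0 ≤ g u := fun u hu =>
      mul_nonneg (pow_nonneg pi_pos.le s)
        (reducedVolume_nonneg s ((one_le_div (zero_lt_one.trans_le hu.1)).2 hu.2))
    calc volume (normProdRegion (s + 1) T)
        = ∫⁻ z : ℂ, (Icc 1 T).indicator (fun u => ENNReal.ofReal (g u)) (‖z‖ ^ 2) := by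
          rw [volume_eq_lintegral_volume_fin_cons (isClosed_normProdRegion _ _).measurableSet]
          simp_rw [volume_setOf_cons_mem_normProdRegion_succ fun x hx => ih hx]
          rfl
      _ = ENNReal.ofReal π * ∫⁻ u in Icc 1 T, ENNReal.ofReal (g u) := by
          rw [lintegral_comp_norm_sq (hg_meas.indicator measurableSet_Icc),
            setLIntegral_indicator measurableSet_Icc,
            inter_eq_left.2 (show Icc (1 : ℝ) T ⊆ Ioi 0 from
              fun u hu => zero_lt_one.trans_le hu.1)]
      _ = ENNReal.ofReal π * ENNReal.ofReal (∫ u in (1 : ℝ)..T, g u) := by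
          rw [intervalIntegral.integral_of_le hT, ← integral_Icc_eq_integral_Ioc,
            ofReal_integral_eq_lintegral_ofReal hg_cont.integrableOn_Icc
              (ae_restrict_of_forall_mem measurableSet_Icc hg_nonneg)]
      _ = ENNReal.ofReal (π ^ (s + 1) * reducedVolume (s + 1) T) := by
          rw [intervalIntegral.integral_const_mul, integral_reducedVolume_div hT,
            ← ENNReal.ofReal_mul pi_pos.le, pow_succ]
          ring_nf

theorem statement8_general (s' : ℕ) (T : ℝ) (hT : 1 ≤ T) :
    (volume {y : Fin s' → ℂ |
        (∏ j, ‖y j‖ ^ 2) ≤ T ∧ ∀ j, 1 ≤ ‖y j‖}).toReal =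
      π ^ s' * ((-1 : ℝ) ^ s' +
        ∑ i ∈ Finset.range s',
          (-1 : ℝ) ^ (s' - 1 - i) * T * (Real.log T) ^ i / (Nat.factorial i)) := by
  change (volume (normProdRegion s' T)).toReal = _
  rw [volume_normProdRegion s' hT,
    ENNReal.toReal_ofReal (mul_nonneg (pow_nonneg pi_pos.le s') (reducedVolume_nonneg s' hT)),
    reducedVolume, signedExpSum, Finset.mul_sum]
  congr 2
  refine Finset.sum_congr rfl fun i _ => ?_
  ring

/-- for s' ≥ 1 and T ≥ 1, the Lebesgue volume of
{(y_1,…,y_{s'}) ∈ ℂ^{s'} : ∏ |y_j|² ≤ T, |y_j| ≥ 1 for all j} equals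
π^{s'}((−1)^{s'} + Σ_{i=0}^{s'−1} (−1)^{s'−1−i} T (log T)^i / i!). -/
theorem statement8 (s' : ℕ) (hs' : 1 ≤ s') (T : ℝ) (hT : 1 ≤ T) :
    (volume {y : Fin s' → ℂ |
        (∏ j, ‖y j‖ ^ 2) ≤ T ∧ ∀ j, 1 ≤ ‖y j‖}).toReal =
      π ^ s' * ((-1 : ℝ) ^ s' +
        ∑ i ∈ Finset.range s',
          (-1 : ℝ) ^ (s' - 1 - i) * T * (Real.log T) ^ i / (Nat.factorial i)) :=
  statement8_general s' T hT
end

section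
/- Let e > 1, m ≥ 1, n > e + C_{e,m} where C_{e,m} = max{2 + 4/(e−1) + 1/(m(e−1)), 7 − e/2 + 2/(me)}, and let g be an integer with 1 ≤ g ≤ e/2. Set γ_g = m(g² + g + e²/g + e) and μ_g = mn(e−g) − 1. Then γ_g − μ_g ≤ −2/e. -/
/-- The constant C_{e,m} = max{2 + 4/(e−1) + 1/(m(e−1)), 7 − e/2 + 2/(me)}. -/
noncomputable def Cem (e m : ℕ) : ℝ :=
  max (2 + 4 / ((e : ℝ) - 1) + 1 / ((m : ℝ) * ((e : ℝ) - 1)))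
      (7 - (e : ℝ) / 2 + 2 / ((m : ℝ) * (e : ℝ)))

set_option maxHeartbeats 1000000 in
/-- for e > 1, m ≥ 1, n > e + C_{e,m} and 1 ≤ g ≤ e/2, with
γ_g = m(g² + g + e²/g + e) and μ_g = mn(e−g) − 1, one has γ_g − μ_g ≤ −2/e. -/
theorem statement9 (e m n g : ℕ) (he : 1 < e) (hm : 1 ≤ m)
    (hn : (e : ℝ) + Cem e m < (n : ℝ))
    (hg1 : 1 ≤ g) (hg2 : (g : ℝ) ≤ (e : ℝ) / 2) :
    ((m : ℝ) * ((g : ℝ) ^ 2 + (g : ℝ) + (e : ℝ) ^ 2 / (g : ℝ) + (e : ℝ)))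
      - ((m : ℝ) * (n : ℝ) * ((e : ℝ) - (g : ℝ)) - 1) ≤ -2 / (e : ℝ) := by
  have he2 : (2:ℝ) ≤ (e:ℝ) := by exact_mod_cast he
  have hm1 : (1:ℝ) ≤ (m:ℝ) := by exact_mod_cast hm
  have hg1' : (1:ℝ) ≤ (g:ℝ) := by exact_mod_cast hg1
  have hMpos : (0:ℝ) < (m:ℝ) := by linarith
  have hE1 : (0:ℝ) < (e:ℝ) - 1 := by linarith
  have hEpos : (0:ℝ) < (e:ℝ) := by linarith
  have hGpos : (0:ℝ) < (g:ℝ) := by linarith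
  have hEG : (0:ℝ) < (e:ℝ) - (g:ℝ) := by linarith
  set C := Cem e m with hC
  have hA : (2 + 4 / ((e : ℝ) - 1) + 1 / ((m : ℝ) * ((e : ℝ) - 1))) ≤ C := le_max_left _ _
  have hB : (7 - (e : ℝ) / 2 + 2 / ((m : ℝ) * (e : ℝ))) ≤ C := le_max_right _ _
  have hCpos : (0:ℝ) < C := lt_of_lt_of_le (by positivity) hA
  have hA' : 2*(m:ℝ)*((e:ℝ)-1) + 4*(m:ℝ) + 1 ≤ (m:ℝ)*((e:ℝ)-1)*C := by
    have h := mul_le_mul_of_nonneg_left hA (le_of_lt (mul_pos hMpos hE1))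
    have heq : (m:ℝ)*((e:ℝ)-1)*(2 + 4/((e:ℝ)-1) + 1/((m:ℝ)*((e:ℝ)-1)))
        = 2*(m:ℝ)*((e:ℝ)-1) + 4*(m:ℝ) + 1 := by
      field_simp
    linarith [heq ▸ h]
  have hB' : 14*(m:ℝ)*(e:ℝ) - (m:ℝ)*(e:ℝ)^2 + 4 ≤ 2*(m:ℝ)*(e:ℝ)*C := by
    have h := mul_le_mul_of_nonneg_left hB (by positivity : (0:ℝ) ≤ 2*(m:ℝ)*(e:ℝ))
    have heq : 2*(m:ℝ)*(e:ℝ)*(7 - (e:ℝ)/2 + 2/((m:ℝ)*(e:ℝ)))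
        = 14*(m:ℝ)*(e:ℝ) - (m:ℝ)*(e:ℝ)^2 + 4 := by
      field_simp
      ring
    linarith [heq ▸ h]
  -- endpoint values of Q(x) = m(e+C)x(e−x) − m(x³+x²+e²+ex) − x
  have hQa : 0 ≤ (m:ℝ)*((e:ℝ)+C)*(1*((e:ℝ)-1))
      - ((m:ℝ)*(1+1+(e:ℝ)^2+(e:ℝ)*1) + 1) := by nlinarith [hA']
  have hQb : 0 ≤ (m:ℝ)*((e:ℝ)+C)*(((e:ℝ)/2)*((e:ℝ)-(e:ℝ)/2))
      - ((m:ℝ)*(((e:ℝ)/2)^3+((e:ℝ)/2)^2+(e:ℝ)^2+(e:ℝ)*((e:ℝ)/2)) + (e:ℝ)/2) := by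
    nlinarith [mul_le_mul_of_nonneg_left hB' (by positivity : (0:ℝ) ≤ (e:ℝ)/8)]
  -- key concavity inequality: Q(g) ≥ 0 on [1, e/2]
  have key : (m:ℝ)*((g:ℝ)^3+(g:ℝ)^2+(e:ℝ)^2+(e:ℝ)*(g:ℝ)) + (g:ℝ)
      ≤ (m:ℝ)*((e:ℝ)+C)*((g:ℝ)*((e:ℝ)-(g:ℝ))) := by
    rcases eq_or_lt_of_le he2 with heq | hE3
    · -- e = 2, so g = 1
      have hGeq : (g:ℝ) = 1 := le_antisymm (by rw [← heq] at hg2; linarith) hg1'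
      rw [hGeq, ← heq]
      rw [← heq] at hA'
      nlinarith [hA']
    · -- e > 2: concavity interpolation
      have hba : (0:ℝ) < (e:ℝ)/2 - 1 := by linarith
      have t1 : 0 ≤ ((e:ℝ)/2 - (g:ℝ)) * ((m:ℝ)*((e:ℝ)+C)*(1*((e:ℝ)-1))
          - ((m:ℝ)*(1+1+(e:ℝ)^2+(e:ℝ)*1) + 1)) :=
        mul_nonneg (by linarith) hQa
      have t2 : 0 ≤ ((g:ℝ) - 1) * ((m:ℝ)*((e:ℝ)+C)*(((e:ℝ)/2)*((e:ℝ)-(e:ℝ)/2))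
          - ((m:ℝ)*(((e:ℝ)/2)^3+((e:ℝ)/2)^2+(e:ℝ)^2+(e:ℝ)*((e:ℝ)/2)) + (e:ℝ)/2)) :=
        mul_nonneg (by linarith) hQb
      have t3 : 0 ≤ (m:ℝ) * ((g:ℝ) - 1) * ((e:ℝ)/2 - (g:ℝ))
          * ((g:ℝ) + 1 + (e:ℝ)/2 + (e:ℝ) + C + 1) * ((e:ℝ)/2 - 1) := by
        apply mul_nonneg
        apply mul_nonneg
        apply mul_nonneg
        apply mul_nonneg hMpos.le
        · linarith
        · linarith
        · linarith
        · linarith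
      -- the identity: Q(g)*(b-a) = t1 + t2 + t3
      have hid : ((m:ℝ)*((e:ℝ)+C)*((g:ℝ)*((e:ℝ)-(g:ℝ)))
          - ((m:ℝ)*((g:ℝ)^3+(g:ℝ)^2+(e:ℝ)^2+(e:ℝ)*(g:ℝ)) + (g:ℝ))) * ((e:ℝ)/2 - 1)
          = ((e:ℝ)/2 - (g:ℝ)) * ((m:ℝ)*((e:ℝ)+C)*(1*((e:ℝ)-1))
              - ((m:ℝ)*(1+1+(e:ℝ)^2+(e:ℝ)*1) + 1))
            + ((g:ℝ) - 1) * ((m:ℝ)*((e:ℝ)+C)*(((e:ℝ)/2)*((e:ℝ)-(e:ℝ)/2))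
              - ((m:ℝ)*(((e:ℝ)/2)^3+((e:ℝ)/2)^2+(e:ℝ)^2+(e:ℝ)*((e:ℝ)/2)) + (e:ℝ)/2))
            + (m:ℝ) * ((g:ℝ) - 1) * ((e:ℝ)/2 - (g:ℝ))
              * ((g:ℝ) + 1 + (e:ℝ)/2 + (e:ℝ) + C + 1) * ((e:ℝ)/2 - 1) := by
        ring
      have h5 : 0 * ((e:ℝ)/2 - 1) ≤ ((m:ℝ)*((e:ℝ)+C)*((g:ℝ)*((e:ℝ)-(g:ℝ)))
          - ((m:ℝ)*((g:ℝ)^3+(g:ℝ)^2+(e:ℝ)^2+(e:ℝ)*(g:ℝ)) + (g:ℝ))) * ((e:ℝ)/2 - 1) := by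
        rw [zero_mul, hid]; linarith
      have h6 := le_of_mul_le_mul_right h5 hba
      linarith
  -- strict inequality with n
  have hreal : (m:ℝ)*((g:ℝ)^3+(g:ℝ)^2+(e:ℝ)^2+(e:ℝ)*(g:ℝ)) + (g:ℝ)
      < (m:ℝ)*(n:ℝ)*((g:ℝ)*((e:ℝ)-(g:ℝ))) := by
    have hpos : (0:ℝ) < (g:ℝ)*((e:ℝ)-(g:ℝ)) := mul_pos hGpos hEG
    nlinarith [mul_lt_mul_of_pos_right (mul_lt_mul_of_pos_left hn hMpos) hpos]
  -- integrality: upgrade strict < to gap of 1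
  have hge : g ≤ e := by
    have : (g:ℝ) ≤ (e:ℝ) := by linarith
    exact_mod_cast this
  have hcastEG : ((e:ℝ) - (g:ℝ)) = ((e - g : ℕ) : ℝ) := by
    push_cast [Nat.cast_sub hge]; ring
  have hnat : m*(g^3+g^2+e^2+e*g) + g < m*n*(g*(e-g)) := by
    rw [hcastEG] at hreal
    exact_mod_cast hreal
  have hnat1 : m*(g^3+g^2+e^2+e*g) + g + 1 ≤ m*n*(g*(e-g)) := hnat
  have hreal1 : (m:ℝ)*((g:ℝ)^3+(g:ℝ)^2+(e:ℝ)^2+(e:ℝ)*(g:ℝ)) + (g:ℝ) + 1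
      ≤ (m:ℝ)*(n:ℝ)*((g:ℝ)*((e:ℝ)-(g:ℝ))) := by
    have h := (Nat.cast_le (α := ℝ)).2 hnat1
    push_cast [Nat.cast_sub hge] at h
    linarith
  -- conclude
  rw [← sub_nonneg]
  have hkey : -2 / (e:ℝ) - (((m : ℝ) * ((g : ℝ) ^ 2 + (g : ℝ) + (e : ℝ) ^ 2 / (g : ℝ) + (e : ℝ)))
      - ((m : ℝ) * (n : ℝ) * ((e : ℝ) - (g : ℝ)) - 1))
      = ((m:ℝ)*(n:ℝ)*((g:ℝ)*((e:ℝ)-(g:ℝ)))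
        - ((m:ℝ)*((g:ℝ)^3+(g:ℝ)^2+(e:ℝ)^2+(e:ℝ)*(g:ℝ)) + (g:ℝ) + 2*(g:ℝ)/(e:ℝ)))
        / (g:ℝ) := by
    field_simp
    ring
  rw [hkey]
  apply div_nonneg _ hGpos.le
  have h2g : 2*(g:ℝ)/(e:ℝ) ≤ 1 := by
    rw [div_le_one hEpos]; linarith
  linarith
end

section
/- Let t ≥ 0 be an integer, and D_0,…,D_t real numbers with D_{t+1} = 0. Suppose N(X) = Σ_{i=0}^{t} D_i X^{a}(log X^{a})^i + O(X^{a−1}(log^+ X)^t) for a real a > 1 and all X ≥ 1. Then ζ(s) = s∫_1^∞ N(X) X^{−s−1} dX (equal to Σ H(α)^{−s} by partial summation) extends meromorphically to Re(s) > a − 1 with a single pole at s = a of order t+1, and the principal part of the Laurent expansion at s = a is Σ_{i=1}^{t+1} a^i (i−1)! (D_{i−1} + i D_i) / (s−a)^i. -/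
/-!
Write `N = M + E` with `M(X) = ∑ D_i X^a (log X^a)^i`. Since `log X^a = a log X`, the main term
contributes `∑ D_i a^i ∫_1^∞ (log X)^i X^{a-s-1} dX = ∑ D_i a^i i!/(s-a)^{i+1}`, the integral
being evaluated by induction on `i`, integrating by parts. Multiplying by `s = (s - a) + a` and
telescoping, with `D_{t+1} = 0`, leaves `D_0` plus the stated principal part. The error term
`E(X) = O(X^{a-1}(log⁺X)^t)` is `O(X^{a-1+ε})` for every `ε > 0`, so `∫_1^∞ E(X) X^{-s-1} dX` is a
Mellin transform holomorphic on `Re s > a - 1`; hence `h(s) = D_0 + s ∫_1^∞ E(X) X^{-s-1} dX`.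
-/

open MeasureTheory Set Filter Asymptotics Topology

lemma isBigO_rpow_mul_max_one_log_pow (σ : ℝ) (j : ℕ) {ε : ℝ} (hε : 0 < ε) :
    (fun x : ℝ => x ^ σ * max 1 (Real.log x) ^ j) =O[atTop] fun x => x ^ (σ + ε) := by
  have hlog : (fun x : ℝ => Real.log x ^ j) =O[atTop] fun x => x ^ ε := by
    simpa only [Real.rpow_natCast] using (isLittleO_log_rpow_rpow_atTop (j : ℝ) hε).isBigO
  have hmax : (fun x : ℝ => max 1 (Real.log x) ^ j) =ᶠ[atTop] fun x => Real.log x ^ j := by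
    filter_upwards [Real.tendsto_log_atTop.eventually_ge_atTop 1] with x hx
    rw [max_eq_right hx]
  refine ((isBigO_refl (fun x : ℝ => x ^ σ) atTop).mul (hmax.trans_isBigO hlog)).congr' ?_ ?_
  · rfl
  · filter_upwards [eventually_gt_atTop 0] with x hx
    rw [Real.rpow_add hx]

lemma continuousOn_rpow_mul_max_one_log_pow (σ : ℝ) (j : ℕ) :
    ContinuousOn (fun x : ℝ => x ^ σ * max 1 (Real.log x) ^ j) (Ioi 0) := by
  refine ContinuousOn.mul (fun x hx => ?_) ((ContinuousOn.sup' continuousOn_const ?_).pow j)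
  · exact (Real.continuousAt_rpow_const x σ (Or.inl (ne_of_gt hx))).continuousWithinAt
  · exact Real.continuousOn_log.mono fun x hx => ne_of_gt hx

lemma integrableOn_Ioi_one_rpow_mul_max_one_log_pow {σ : ℝ} (hσ : σ < -1) (j : ℕ) :
    IntegrableOn (fun x : ℝ => x ^ σ * max 1 (Real.log x) ^ j) (Ioi 1) := by
  have hε : 0 < (-1 - σ) / 2 := by linarith
  have hloc := (continuousOn_rpow_mul_max_one_log_pow σ j).mono
    (Ici_subset_Ioi.mpr one_pos) |>.locallyIntegrableOn (μ := volume) measurableSet_Ici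
  refine (hloc.integrableOn_of_isBigO_atTop (isBigO_rpow_mul_max_one_log_pow σ j hε)
    ⟨Ioi 1, Ioi_mem_atTop 1, integrableOn_Ioi_rpow_of_lt (by linarith) one_pos⟩).mono_set
    Ioi_subset_Ici_self

section ErrorTerm

variable {f : ℝ → ℂ} {C σ : ℝ} {j : ℕ}

lemma integrableOn_Ioi_one_mul_cpow_of_norm_le
    (hf : AEStronglyMeasurable f (volume.restrict (Ioi 1)))
    (hbound : ∀ x ∈ Ioi (1 : ℝ), ‖f x‖ ≤ C * x ^ σ * max 1 (Real.log x) ^ j)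
    {s : ℂ} (hs : σ < s.re) :
    IntegrableOn (fun x : ℝ => f x * (x : ℂ) ^ (-s - 1)) (Ioi 1) := by
  have hdom := (integrableOn_Ioi_one_rpow_mul_max_one_log_pow
    (σ := σ - s.re - 1) (by linarith) j).const_mul C
  refine Integrable.mono' hdom (hf.mul ?_) ?_
  · exact (Complex.continuous_ofReal.continuousOn.cpow_const fun x hx =>
      Complex.ofReal_mem_slitPlane.mpr (zero_lt_one.trans hx)).aestronglyMeasurable
      measurableSet_Ioi
  · filter_upwards [ae_restrict_mem measurableSet_Ioi] with x hx
    have hx0 : 0 < x := zero_lt_one.trans hx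
    rw [norm_mul, Complex.norm_cpow_eq_rpow_re_of_pos hx0]
    calc ‖f x‖ * x ^ (-s - 1).re
        ≤ C * x ^ σ * max 1 (Real.log x) ^ j * x ^ (-s - 1).re := by
          gcongr
          exact hbound x hx
      _ = C * (x ^ (σ - s.re - 1) * max 1 (Real.log x) ^ j) := by
          rw [show σ - s.re - 1 = σ + (-s - 1).re by simp; ring, Real.rpow_add hx0]
          ring

lemma mellin_indicator_Ioi_one_neg (s : ℂ) :
    mellin ((Ioi 1).indicator f) (-s) = ∫ x in Ioi (1 : ℝ), f x * (x : ℂ) ^ (-s - 1) := by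
  have hpt : (fun x : ℝ => (x : ℂ) ^ (-s - 1) • (Ioi 1).indicator f x)
      = (Ioi 1).indicator fun x => f x * (x : ℂ) ^ (-s - 1) := by
    ext x
    by_cases hx : x ∈ Ioi (1 : ℝ) <;> simp [hx, mul_comm]
  rw [mellin, hpt, setIntegral_indicator measurableSet_Ioi,
    Ioi_inter_Ioi, sup_of_le_right zero_le_one]

lemma differentiableOn_integral_Ioi_one_mul_cpow
    (hf : AEStronglyMeasurable f (volume.restrict (Ioi 1)))
    (hbound : ∀ x ∈ Ioi (1 : ℝ), ‖f x‖ ≤ C * x ^ σ * max 1 (Real.log x) ^ j) :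
    DifferentiableOn ℂ (fun s => ∫ x in Ioi (1 : ℝ), f x * (x : ℂ) ^ (-s - 1))
      {s : ℂ | σ < s.re} := by
  intro s (hs : σ < s.re)
  set g := (Ioi (1 : ℝ)).indicator f
  have hg_le : ∀ x, ‖g x‖ ≤ ‖C • (x ^ σ * max 1 (Real.log x) ^ j)‖ := by
    intro x
    by_cases hx : x ∈ Ioi (1 : ℝ)
    · simpa [g, hx, mul_assoc] using (hbound x hx).trans (le_abs_self _)
    · simp only [g, indicator_of_notMem hx, norm_zero]
      positivity
  have hg_meas : AEStronglyMeasurable g volume :=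
    (aestronglyMeasurable_indicator_iff measurableSet_Ioi).mpr hf
  have hg_loc : LocallyIntegrableOn g (Ioi 0) := by
    refine LocallyIntegrableOn.mono ?_ hg_meas (ae_of_all _ hg_le)
    exact ((continuousOn_rpow_mul_max_one_log_pow σ j).const_smul C).locallyIntegrableOn
      measurableSet_Ioi
  have hε : 0 < (s.re - σ) / 2 := by linarith
  have hg_top : g =O[atTop] (· ^ (-(-(σ + (s.re - σ) / 2)))) := by
    simpa only [neg_neg] using ((IsBigO.of_bound' (Eventually.of_forall hg_le)).trans
      ((isBigO_refl _ _).const_smul_left C)).trans (isBigO_rpow_mul_max_one_log_pow σ j hε)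
  have hg_bot : g =O[𝓝[>] 0] (· ^ (-(-s.re - 1))) := by
    refine EventuallyEq.trans_isBigO ?_ (isBigO_zero _ _)
    filter_upwards [nhdsWithin_le_nhds (Iio_mem_nhds one_pos)] with x (hx : x < 1)
    exact indicator_of_notMem (not_lt.mpr hx.le) f
  have hmellin : DifferentiableAt ℂ (mellin g) (-s) :=
    mellin_differentiableAt_of_isBigO_rpow hg_loc hg_top
    (by rw [Complex.neg_re]; linarith) hg_bot (by rw [Complex.neg_re]; linarith)
  rw [show (fun s => ∫ x in Ioi (1 : ℝ), f x * (x : ℂ) ^ (-s - 1)) = fun s => mellin g (-s) from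
    funext fun s => (mellin_indicator_Ioi_one_neg s).symm]
  exact (hmellin.comp s differentiableAt_id.neg).differentiableWithinAt

end ErrorTerm

section LogPowerIntegral

variable {r : ℂ}

lemma integrableOn_Ioi_one_log_pow_mul_cpow (hr : 0 < r.re) (i : ℕ) :
    IntegrableOn (fun x : ℝ => (Real.log x : ℂ) ^ i * (x : ℂ) ^ (-r - 1)) (Ioi 1) := by
  refine integrableOn_Ioi_one_mul_cpow_of_norm_le (C := 1) (σ := 0) (j := i) (by fun_prop)
    (fun x (hx : 1 < x) => ?_) hr
  rw [norm_pow, Complex.norm_real, Real.norm_of_nonneg (Real.log_nonneg hx.le), Real.rpow_zero,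
    one_mul, one_mul]
  exact pow_le_pow_left₀ (Real.log_nonneg hx.le) (le_max_right _ _) i

lemma hasDerivAt_log_pow_mul_cpow_neg (i : ℕ) (hr : r ≠ 0) {x : ℝ} (hx : 0 < x) :
    HasDerivAt (fun y : ℝ => (Real.log y : ℂ) ^ i * (y : ℂ) ^ (-r))
      (i * ((Real.log x : ℂ) ^ (i - 1) * (x : ℂ) ^ (-r - 1))
        - r * ((Real.log x : ℂ) ^ i * (x : ℂ) ^ (-r - 1))) x := by
  have hlog := ((Real.hasDerivAt_log hx.ne').ofReal_comp).pow i
  have hcpow := hasDerivAt_ofReal_cpow_const hx.ne' (neg_ne_zero.mpr hr)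
  refine (hlog.mul hcpow).congr_deriv ?_
  have hx' : (x : ℂ) ≠ 0 := Complex.ofReal_ne_zero.mpr hx.ne'
  rw [Complex.cpow_sub _ _ hx', Complex.cpow_one, Complex.ofReal_inv, Pi.pow_apply]
  ring

lemma tendsto_log_pow_mul_cpow_neg_atTop (hr : 0 < r.re) (i : ℕ) :
    Tendsto (fun x : ℝ => (Real.log x : ℂ) ^ i * (x : ℂ) ^ (-r)) atTop (𝓝 0) := by
  refine tendsto_zero_iff_norm_tendsto_zero.mpr
    ((isLittleO_log_rpow_rpow_atTop (i : ℝ) hr).tendsto_div_nhds_zero.congr' ?_)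
  filter_upwards [eventually_ge_atTop 1] with x hx
  rw [norm_mul, norm_pow, Complex.norm_real, Real.norm_of_nonneg (Real.log_nonneg hx),
    Complex.norm_cpow_eq_rpow_re_of_pos (by linarith), Complex.neg_re,
    Real.rpow_neg (by linarith), Real.rpow_natCast, div_eq_mul_inv]

/-- Integration by parts against `d(x ^ (-r))`; the boundary term at `1` is `0 ^ i`, and at
`i = 0` the truncated `i - 1` is harmless because of the factor `i`. -/
lemma mul_integral_Ioi_one_log_pow_mul_cpow (hr : 0 < r.re) (i : ℕ) :
    r * ∫ x in Ioi (1 : ℝ), (Real.log x : ℂ) ^ i * (x : ℂ) ^ (-r - 1) =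
      i * (∫ x in Ioi (1 : ℝ), (Real.log x : ℂ) ^ (i - 1) * (x : ℂ) ^ (-r - 1)) + 0 ^ i := by
  have hr0 : r ≠ 0 := fun h => by simp [h] at hr
  have hint := integrableOn_Ioi_one_log_pow_mul_cpow hr
  have hftc := integral_Ioi_of_hasDerivAt_of_tendsto'
    (fun x (hx : 1 ≤ x) => hasDerivAt_log_pow_mul_cpow_neg i hr0 (zero_lt_one.trans_le hx))
    (((hint (i - 1)).const_mul _).sub ((hint i).const_mul _))
    (tendsto_log_pow_mul_cpow_neg_atTop hr i)
  rw [integral_sub ((hint (i - 1)).const_mul _) ((hint i).const_mul _), integral_const_mul,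
    integral_const_mul] at hftc
  simp only [Complex.ofReal_one, Complex.one_cpow, mul_one, Real.log_one, Complex.ofReal_zero]
    at hftc
  linear_combination -hftc

lemma integral_Ioi_one_log_pow_mul_cpow (hr : 0 < r.re) (i : ℕ) :
    ∫ x in Ioi (1 : ℝ), (Real.log x : ℂ) ^ i * (x : ℂ) ^ (-r - 1) = i.factorial / r ^ (i + 1) := by
  have hr0 : r ≠ 0 := fun h => by simp [h] at hr
  induction i with
  | zero =>
    have h := mul_integral_Ioi_one_log_pow_mul_cpow hr 0
    rw [eq_div_iff (by simpa using hr0)]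
    simpa [mul_comm] using h
  | succ n ih =>
    have h := mul_integral_Ioi_one_log_pow_mul_cpow hr (n + 1)
    rw [Nat.add_sub_cancel, ih, zero_pow n.succ_ne_zero, add_zero] at h
    rw [eq_div_iff (pow_ne_zero _ hr0), Nat.factorial_succ, Nat.cast_mul, pow_succ', ← mul_assoc,
      mul_comm _ r, h]
    field_simp

end LogPowerIntegral

lemma mul_sum_mul_factorial_div_sub_pow_succ {K : Type*} [Field K] (t : ℕ) (D : ℕ → K)
    (hD : D (t + 1) = 0) {s a : K} (hs : s ≠ a) :
    s * ∑ i ∈ Finset.range (t + 1), D i * a ^ i * (i.factorial / (s - a) ^ (i + 1)) =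
      D 0 + ∑ i ∈ Finset.Icc 1 (t + 1),
        a ^ i * (i - 1).factorial * (D (i - 1) + i * D i) / (s - a) ^ i := by
  have hu : s - a ≠ 0 := sub_ne_zero.mpr hs
  set c : ℕ → K := fun i => D i * a ^ i * i.factorial / (s - a) ^ i with hc
  have hlhs : s * ∑ i ∈ Finset.range (t + 1), D i * a ^ i * (i.factorial / (s - a) ^ (i + 1)) =
      ∑ i ∈ Finset.range (t + 1), (c i + c i * (a / (s - a))) := by
    rw [Finset.mul_sum]
    refine Finset.sum_congr rfl fun i _ => ?_
    simp only [hc]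
    field_simp
    ring
  have hrhs : ∑ i ∈ Finset.Icc 1 (t + 1),
      a ^ i * (i - 1).factorial * (D (i - 1) + i * D i) / (s - a) ^ i =
      ∑ i ∈ Finset.range (t + 1), (c i * (a / (s - a)) + c (i + 1)) := by
    rw [← Finset.Ico_add_one_right_eq_Icc, Finset.sum_Ico_eq_sum_range, Nat.add_sub_cancel]
    refine Finset.sum_congr rfl fun i _ => ?_
    simp only [hc, Nat.factorial_succ, add_comm 1 i]
    push_cast
    field_simp
    ring
  have htelescope := Finset.sum_range_sub' c (t + 1)
  rw [show c (t + 1) = 0 by simp [hc, hD], show c 0 = D 0 by simp [hc], sub_zero] at htelescope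
  rw [hlhs, hrhs, ← htelescope, ← Finset.sum_add_distrib]
  exact Finset.sum_congr rfl fun i _ => by ring

lemma ofReal_rpow_mul_log_rpow_pow_mul_cpow {x : ℝ} (hx : 0 < x) (a : ℝ) (i : ℕ) (s : ℂ) :
    ((x ^ a * Real.log (x ^ a) ^ i : ℝ) : ℂ) * (x : ℂ) ^ (-s - 1) =
      (a : ℂ) ^ i * ((Real.log x : ℂ) ^ i * (x : ℂ) ^ (-(s - a) - 1)) := by
  have hx' : (x : ℂ) ≠ 0 := Complex.ofReal_ne_zero.mpr hx.ne'
  rw [Real.log_rpow hx, show -(s - a) - 1 = a + (-s - 1) by ring, Complex.cpow_add _ _ hx']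
  push_cast [Complex.ofReal_cpow hx.le]
  ring

section MainTerm

variable (S : Finset ℕ) (D : ℕ → ℝ) {a : ℝ} {s : ℂ}

lemma eqOn_sum_rpow_mul_log_rpow_pow_mul_cpow :
    EqOn (fun x : ℝ => ((∑ i ∈ S, D i * x ^ a * Real.log (x ^ a) ^ i : ℝ) : ℂ) * (x : ℂ) ^ (-s - 1))
      (fun x => ∑ i ∈ S, (D i * (a : ℂ) ^ i) * ((Real.log x : ℂ) ^ i * (x : ℂ) ^ (-(s - a) - 1)))
      (Ioi 1) := by
  intro x (hx : 1 < x)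
  simp only [Complex.ofReal_sum, Finset.sum_mul]
  refine Finset.sum_congr rfl fun i _ => ?_
  rw [mul_assoc, Complex.ofReal_mul, mul_assoc,
    ofReal_rpow_mul_log_rpow_pow_mul_cpow (zero_lt_one.trans hx), mul_assoc]

lemma integrableOn_Ioi_one_sum_rpow_mul_log_rpow_pow_mul_cpow (hs : a < s.re) :
    IntegrableOn
      (fun x : ℝ => ((∑ i ∈ S, D i * x ^ a * Real.log (x ^ a) ^ i : ℝ) : ℂ) * (x : ℂ) ^ (-s - 1))
      (Ioi 1) := by
  have hsa : 0 < (s - a).re := by simpa using hs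
  refine (integrableOn_congr_fun (eqOn_sum_rpow_mul_log_rpow_pow_mul_cpow S D)
    measurableSet_Ioi).mpr ?_
  exact integrable_finsetSum _ fun i _ =>
    (integrableOn_Ioi_one_log_pow_mul_cpow hsa i).const_mul _

lemma integral_Ioi_one_sum_rpow_mul_log_rpow_pow_mul_cpow (hs : a < s.re) :
    ∫ x in Ioi (1 : ℝ), ((∑ i ∈ S, D i * x ^ a * Real.log (x ^ a) ^ i : ℝ) : ℂ) * (x : ℂ) ^ (-s - 1)
      = ∑ i ∈ S, (D i * (a : ℂ) ^ i) * (i.factorial / (s - a) ^ (i + 1)) := by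
  have hsa : 0 < (s - a).re := by simpa using hs
  rw [setIntegral_congr_fun measurableSet_Ioi (eqOn_sum_rpow_mul_log_rpow_pow_mul_cpow S D),
    integral_finsetSum _ fun i _ => (integrableOn_Ioi_one_log_pow_mul_cpow hsa i).const_mul _]
  refine Finset.sum_congr rfl fun i _ => ?_
  rw [integral_const_mul, integral_Ioi_one_log_pow_mul_cpow hsa]

end MainTerm

theorem statement19_general (N : ℝ → ℝ) (hN : Measurable N)
    (a : ℝ) (t : ℕ) (D : ℕ → ℝ) (hDtop : D (t + 1) = 0)
    (C : ℝ)
    (hbound : ∀ X : ℝ, 1 ≤ X →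
      |N X - ∑ i ∈ Finset.range (t + 1), D i * X ^ a * (Real.log (X ^ a)) ^ i| ≤
        C * X ^ (a - 1) * (max 1 (Real.log X)) ^ t) :
    ∃ h : ℂ → ℂ, DifferentiableOn ℂ h {s : ℂ | a - 1 < s.re} ∧
      ∀ s : ℂ, a < s.re →
        s * ∫ X in Set.Ioi (1 : ℝ), (N X : ℂ) * (X : ℂ) ^ (-s - 1) =
          h s + ∑ i ∈ Finset.Icc 1 (t + 1),
            (a : ℂ) ^ i * ((i - 1).factorial : ℂ) *
              ((D (i - 1) : ℂ) + (i : ℂ) * (D i : ℂ)) / (s - (a : ℂ)) ^ i := by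
  set M : ℝ → ℝ := fun X => ∑ i ∈ Finset.range (t + 1), D i * X ^ a * Real.log (X ^ a) ^ i
  set E : ℝ → ℂ := fun X => ((N X - M X : ℝ) : ℂ)
  have hE_meas : AEStronglyMeasurable E (volume.restrict (Ioi 1)) := by fun_prop
  have hE_bound : ∀ X ∈ Ioi (1 : ℝ), ‖E X‖ ≤ C * X ^ (a - 1) * max 1 (Real.log X) ^ t :=
    fun X hX => by simpa only [E, Complex.norm_real, Real.norm_eq_abs] using hbound X hX.out.le
  refine ⟨fun s => D 0 + s * ∫ X in Ioi 1, E X * (X : ℂ) ^ (-s - 1),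
    (differentiableOn_const _).add
      (differentiableOn_id.mul (differentiableOn_integral_Ioi_one_mul_cpow hE_meas hE_bound)),
    fun s hs => ?_⟩
  have hsplit : (fun X : ℝ => (N X : ℂ) * (X : ℂ) ^ (-s - 1)) =
      fun X => (M X : ℂ) * (X : ℂ) ^ (-s - 1) + E X * (X : ℂ) ^ (-s - 1) := by
    ext X
    simp only [E, Complex.ofReal_sub]
    ring
  rw [hsplit, integral_add (integrableOn_Ioi_one_sum_rpow_mul_log_rpow_pow_mul_cpow _ D hs)
      (integrableOn_Ioi_one_mul_cpow_of_norm_le hE_meas hE_bound (by linarith)),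
    integral_Ioi_one_sum_rpow_mul_log_rpow_pow_mul_cpow _ D hs, mul_add,
    mul_sum_mul_factorial_div_sub_pow_succ t (fun i => (D i : ℂ)) (by simp [hDtop])
      (fun h => by simp [h] at hs)]
  ring

/-- suppose `N(X) = Σ_{i=0}^{t} D_i X^a (log X^a)^i +
O(X^{a−1}(log⁺X)^t)` for a real `a > 1`, with `D_{t+1} = 0` (and `D_t ≠ 0`, so
the pole really has order `t+1`). Then `ζ(s) = s∫_1^∞ N(X) X^{−s−1} dX`
(defined for `Re s > a`) extends meromorphically to `Re s > a−1` with a single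
pole at `s = a` of order `t+1`, and principal part
`Σ_{i=1}^{t+1} a^i (i−1)! (D_{i−1} + i·D_i)/(s−a)^i`: there is a function `h`
holomorphic on `{Re s > a−1}` such that `ζ(s) = h(s) + (principal part)` for
`Re s > a`. -/
theorem statement19 (N : ℝ → ℝ) (hN : Measurable N)
    (a : ℝ) (ha : 1 < a) (t : ℕ) (D : ℕ → ℝ) (hDtop : D (t + 1) = 0)
    (hDt : D t ≠ 0) (C : ℝ)
    (hbound : ∀ X : ℝ, 1 ≤ X →
      |N X - ∑ i ∈ Finset.range (t + 1), D i * X ^ a * (Real.log (X ^ a)) ^ i| ≤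
        C * X ^ (a - 1) * (max 1 (Real.log X)) ^ t) :
    ∃ h : ℂ → ℂ, DifferentiableOn ℂ h {s : ℂ | a - 1 < s.re} ∧
      ∀ s : ℂ, a < s.re →
        s * ∫ X in Set.Ioi (1 : ℝ), (N X : ℂ) * (X : ℂ) ^ (-s - 1) =
          h s + ∑ i ∈ Finset.Icc 1 (t + 1),
            (a : ℂ) ^ i * ((i - 1).factorial : ℂ) *
              ((D (i - 1) : ℂ) + (i : ℂ) * (D i : ℂ)) / (s - (a : ℂ)) ^ i :=
  statement19_general N hN a t D hDtop C hbound
end
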